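/- arXiv:2312.16278 — 2 statements merged into one kernel-verified Lean document; each statement's English description precedes it below -/
import Mathlib

section
/- For n, i with n a rational number and i a natural number, define F_{n,i}(z,w) = (z^{-n}/i!) · (∂/∂w)^i ( w^n/(z−w) ). Then F_{n,i}(z,w) − F_{n+1,i}(z,w) = C(n,i) · z^{−n−1} · w^{n−i}, where C(n,i) = n(n−1)⋯(n−i+1)/i! is the generalized binomial coefficient. -/
/-- The generalized binomial coefficient `C(q, k) = q(q-1)⋯(q-k+1)/k!`. -/
noncomputable def genBinom (q : ℚ) (k : ℕ) : ℚ :=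
  (∏ j ∈ Finset.range k, (q - (j : ℚ))) / (Nat.factorial k : ℚ)

/-- Work in a field `K` (e.g. the fraction field of polynomials in `z^{1/T}, w^{1/T}`)
equipped with a derivation `d = ∂/∂w`.  The element `zp m` represents `z^{m/T}` and
`wp m` represents `w^{m/T}` (so `zp T = z`, `wp T = w`); the hypotheses record the
exponent laws and the formal differentiation rules.  With
`F n i = z^{-n/T}/i! · d^i ( w^{n/T}/(z − w) )`, one has
`F_{n,i} − F_{n+1,i} = C(n/T, i) · z^{−n/T−1} · w^{n/T−i}`. -/
theorem F_succ_sub (K : Type*) [Field K] [CharZero K] [Algebra ℚ K]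
    (d : Derivation ℚ K K) (T : ℕ) (hT : 0 < T)
    (zp wp : ℤ → K)
    (hz0 : zp 0 = 1) (hzadd : ∀ a b : ℤ, zp (a + b) = zp a * zp b)
    (hw0 : wp 0 = 1) (hwadd : ∀ a b : ℤ, wp (a + b) = wp a * wp b)
    (hdz : ∀ m : ℤ, d (zp m) = 0)
    (hdw : ∀ m : ℤ, d (wp m) = ((m : K) / (T : K)) * wp (m - T))
    (hzw : zp T - wp T ≠ 0)
    (F : ℤ → ℕ → K)
    (hF : ∀ (n : ℤ) (i : ℕ),
      F n i = zp (-n) / (Nat.factorial i : K) * (⇑d)^[i] (wp n / (zp T - wp T)))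
    (n : ℤ) (i : ℕ) :
    F n i - F (n + T) i
      = algebraMap ℚ K (genBinom ((n : ℚ) / (T : ℚ)) i)
          * zp (-n - T) * wp (n - (i : ℤ) * T) := by
  have hT0 : (T : ℚ) ≠ 0 := Nat.cast_ne_zero.mpr hT.ne'
  have hTK : (T : K) ≠ 0 := Nat.cast_ne_zero.mpr hT.ne'
  have dconst : ∀ q : ℚ, d ((q : K)) = 0 := by
    intro q
    rw [show ((q : K)) = algebraMap ℚ K q from (eq_ratCast (algebraMap ℚ K) q).symm]
    exact d.map_algebraMap q
  have hzT : zp (-T) * zp T = 1 := by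
    rw [← hzadd]; simp [hz0]
  -- iterate commutes with multiplication by d-constants
  have hiter_mul : ∀ (i : ℕ) (c x : K), d c = 0 → (⇑d)^[i] (c * x) = c * (⇑d)^[i] x := by
    intro i
    induction i with
    | zero => intro c x _; rfl
    | succ i ih =>
        intro c x hc
        rw [Function.iterate_succ_apply', ih c x hc, Function.iterate_succ_apply',
          d.leibniz, hc, smul_eq_mul, smul_eq_mul, mul_zero, add_zero]
  have hiter_sub : ∀ (i : ℕ) (x y : K), (⇑d)^[i] (x - y) = (⇑d)^[i] x - (⇑d)^[i] y := by
    intro i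
    induction i with
    | zero => intro x y; rfl
    | succ i ih =>
        intro x y
        rw [Function.iterate_succ_apply', ih, map_sub, Function.iterate_succ_apply',
          Function.iterate_succ_apply']
  -- iterated derivative of a power of w
  have key : ∀ (i : ℕ) (m : ℤ),
      (⇑d)^[i] (wp m)
        = ((∏ j ∈ Finset.range i, ((m : ℚ) / (T : ℚ) - (j : ℚ)) : ℚ) : K)
            * wp (m - (i : ℤ) * T) := by
    intro i
    induction i with
    | zero => intro m; simp
    | succ i ih =>
        intro m
        rw [Function.iterate_succ_apply', ih, d.leibniz, dconst, smul_eq_mul, smul_eq_mul,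
          mul_zero, add_zero, hdw]
        have hc : ((m - (i : ℤ) * T : ℤ) : K) / (T : K)
            = (((m : ℚ) / (T : ℚ) - (i : ℚ) : ℚ) : K) := by
          push_cast
          rw [sub_div, mul_div_assoc, div_self hTK]
          ring
        rw [hc, Finset.prod_range_succ]
        push_cast
        have : m - (i : ℤ) * T - (T : ℤ) = m - ((i : ℤ) + 1) * T := by ring
        rw [this]
        ring
  -- split the fraction
  have hsplit : wp n / (zp T - wp T) - zp (-T) * (wp (n + T) / (zp T - wp T))
      = zp (-T) * wp n := by
    rw [hwadd n T]
    field_simp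
    linear_combination (-(wp n)) * hzT
  have hfac : ((Nat.factorial i : K)) ≠ 0 := Nat.cast_ne_zero.mpr (Nat.factorial_ne_zero i)
  have hzsplit : zp (-(n + T)) = zp (-n) * zp (-T) := by
    rw [show (-(n + (T : ℤ))) = -n + (-(T : ℤ)) by ring, hzadd]
  rw [hF, hF, hzsplit]
  have step : zp (-n) / (Nat.factorial i : K) * (⇑d)^[i] (wp n / (zp T - wp T))
        - zp (-n) * zp (-T) / (Nat.factorial i : K)
            * (⇑d)^[i] (wp (n + T) / (zp T - wp T))
      = zp (-n) / (Nat.factorial i : K)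
          * (⇑d)^[i] (wp n / (zp T - wp T) - zp (-T) * (wp (n + T) / (zp T - wp T))) := by
    rw [hiter_sub, hiter_mul i (zp (-T)) _ (hdz _)]
    ring
  rw [step, hsplit, hiter_mul i (zp (-T)) _ (hdz _), key]
  have hzz : zp (-n - T) = zp (-n) * zp (-T) := by
    rw [show (-n - (T : ℤ)) = -n + (-(T : ℤ)) by ring, hzadd]
  rw [hzz]
  rw [show algebraMap ℚ K (genBinom ((n : ℚ) / (T : ℚ)) i)
      = ((genBinom ((n : ℚ) / (T : ℚ)) i : ℚ) : K) from eq_ratCast _ _]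
  unfold genBinom
  push_cast
  field_simp
end

section
/- Let A be an associative ℂ-algebra with an element E, let N be an A-bimodule spanned by two elements x, y satisfying E·x − x·E = y and E·y − y·E = x, and let U = ℂv be a one-dimensional left A-module with E·v = (1/2)v. Then every A-module homomorphism f: N ⊗_A U → U is zero; whereas if instead W = ℂw is a one-dimensional left A-module with E·w = −(1/2)w, the space of A-module homomorphisms N ⊗_A U → W is at most one-dimensional, cut out by the condition f(y ⊗ v) = −f(x ⊗ v). -/
open TensorProduct MulOpposite

/-!
An `A`-module map `f : N ⊗_A U → M` with `E` acting by the scalar `s` on `M` and by `t` on `v`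
satisfies `f ((E • p - p • E) ⊗ v) = (s - t) • f (p ⊗ v)`. With `E • x - x • E = y` and
`E • y - y • E = x` this gives `f (y ⊗ v) = 0 = f (x ⊗ v)` when `M = U` (`s = t = ½`) and
`f (y ⊗ v) = -f (x ⊗ v)` when `M = W` (`s = -½`). Since `x, y` generate `N` as a bimodule and `v`
spans `U`, such a map is determined by `f (x ⊗ v)`, which lies in the line `ℂ • w`.
-/

theorem smul_eq_smul_of_forall_eq_smul {R A M : Type*} [CommSemiring R] [Semiring A]
    [Algebra R A] [AddCommMonoid M] [Module R M] [Module A M] [IsScalarTower R A M]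
    {E : A} {v : M} {t : R} (hv : ∀ m : M, ∃ c : R, m = c • v) (hEv : E • v = t • v) (m : M) :
    E • m = t • m := by
  obtain ⟨c, rfl⟩ := hv m
  rw [smul_comm, hEv, smul_comm]

theorem exists_smul_eq_smul_of_eq_zero_of_map_eq_zero {R V W : Type*} [CommRing R] [Nontrivial R]
    [AddCommGroup V] [Module R V] [AddCommGroup W] [Module R W]
    (S : Submodule R V) (φ : V →ₗ[R] W) (hφ : ∀ f ∈ S, φ f = 0 → f = 0)
    {w : W} (hw : ∀ u : W, ∃ c : R, u = c • w) {f g : V} (hf : f ∈ S) (hg : g ∈ S) :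
    ∃ c d : R, ¬(c = 0 ∧ d = 0) ∧ c • f = d • g := by
  obtain ⟨cf, hcf⟩ := hw (φ f)
  obtain ⟨cg, hcg⟩ := hw (φ g)
  by_cases hc : cg = 0 ∧ cf = 0
  · refine ⟨1, 0, by simp, ?_⟩
    rw [hφ f hf (by rw [hcf, hc.2, zero_smul]), smul_zero, zero_smul]
  · refine ⟨cg, cf, hc, sub_eq_zero.mp (hφ _ (S.sub_mem (S.smul_mem _ hf) (S.smul_mem _ hg)) ?_)⟩
    rw [map_sub, map_smul, map_smul, hcf, hcg, smul_smul, smul_smul, mul_comm, sub_self]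

section BalancedHoms

variable {R : Type*} (A : Type*) {N U M : Type*} [CommRing R] [Ring A] [Algebra R A]
  [AddCommGroup N] [Module R N] [Module A N] [Module Aᵐᵒᵖ N]
  [AddCommGroup U] [Module R U] [Module A U]
  [AddCommGroup M] [Module R M] [Module A M] [IsScalarTower R A M]

/-- The maps `N ⊗[R] U → M` that descend to `A`-module maps `N ⊗_A U → M`. -/
def balancedHoms : Submodule R (N ⊗[R] U →ₗ[R] M) where
  carrier := {f | (∀ (a : A) (n : N) (u : U), f ((op a • n) ⊗ₜ u) = f (n ⊗ₜ (a • u))) ∧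
    ∀ (a : A) (n : N) (u : U), f ((a • n) ⊗ₜ u) = a • f (n ⊗ₜ u)}
  zero_mem' := ⟨fun _ _ _ => rfl, fun _ _ _ => (smul_zero _).symm⟩
  add_mem' := fun ⟨hf, hf'⟩ ⟨hg, hg'⟩ =>
    ⟨fun a n u => by simp only [LinearMap.add_apply, hf, hg],
     fun a n u => by simp only [LinearMap.add_apply, hf', hg', smul_add]⟩
  smul_mem' := fun c _ ⟨hf, hf'⟩ =>
    ⟨fun a n u => by simp only [LinearMap.smul_apply, hf],
     fun a n u => by simp only [LinearMap.smul_apply, hf', smul_comm c a]⟩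

variable {A}

theorem balancedHoms.apply_tmul_eq_sub_smul
    {f : N ⊗[R] U →ₗ[R] M} (hf : f ∈ balancedHoms A) {E : A} {s t : R}
    (hEM : ∀ m : M, E • m = s • m) {v : U} (hEv : E • v = t • v)
    {p q : N} (hpq : E • p - op E • p = q) :
    f (q ⊗ₜ v) = (s - t) • f (p ⊗ₜ v) := by
  rw [← hpq, sub_tmul, map_sub, hf.2, hf.1, hEv, tmul_smul, map_smul, hEM, sub_smul]

theorem balancedHoms.eq_zero_of_apply_tmul_eq_zero {f : N ⊗[R] U →ₗ[R] M}
    (hf : f ∈ balancedHoms A) {x y : N}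
    (hspan : Submodule.span R {n : N | ∃ a b : A, n = a • op b • x ∨ n = a • op b • y} = ⊤)
    {v : U} (hv : ∀ u : U, ∃ c : R, u = c • v)
    (hx : f (x ⊗ₜ v) = 0) (hy : f (y ⊗ₜ v) = 0) : f = 0 := by
  have hgen : ∀ z : N, f (z ⊗ₜ v) = 0 → ∀ (a b : A) (u : U), f ((a • op b • z) ⊗ₜ u) = 0 :=
    fun z hz a b u => by
      obtain ⟨c, hc⟩ := hv (b • u)
      rw [hf.2, hf.1, hc, tmul_smul, map_smul, hz, smul_zero, smul_zero]
  have hker : LinearMap.ker (TensorProduct.curry f) = ⊤ := by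
    refine top_unique (hspan ▸ Submodule.span_le.mpr ?_)
    rintro _ ⟨a, b, rfl | rfl⟩ <;> ext u
    exacts [hgen x hx a b u, hgen y hy a b u]
  exact curry_injective (LinearMap.ker_eq_top.mp hker)

end BalancedHoms

theorem lattice_fusion_homs_general (A : Type*) [Ring A] [Algebra ℂ A]
    (N : Type*) [AddCommGroup N] [Module ℂ N] [Module A N] [Module Aᵐᵒᵖ N]
    (U W : Type*) [AddCommGroup U] [Module ℂ U] [Module A U] [IsScalarTower ℂ A U]
    [AddCommGroup W] [Module ℂ W] [Module A W] [IsScalarTower ℂ A W]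
    (E : A) (x y : N)
    (hspan : Submodule.span ℂ
        {n : N | ∃ a b : A, n = a • ((op b) • x) ∨ n = a • ((op b) • y)} = ⊤)
    (hx : E • x - (op E) • x = y) (hy : E • y - (op E) • y = x)
    (v : U) (hv : ∀ u : U, ∃ c : ℂ, u = c • v) (hEv : E • v = (2⁻¹ : ℂ) • v)
    (w : W) (hw : ∀ u : W, ∃ c : ℂ, u = c • w) (hEw : E • w = (-2⁻¹ : ℂ) • w) :
    (∀ f : N ⊗[ℂ] U →ₗ[ℂ] U,
      (∀ (a : A) (n : N) (u : U), f (((op a) • n) ⊗ₜ[ℂ] u) = f (n ⊗ₜ[ℂ] (a • u))) →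
      (∀ (a : A) (n : N) (u : U), f ((a • n) ⊗ₜ[ℂ] u) = a • f (n ⊗ₜ[ℂ] u)) →
      f = 0) ∧
    (∀ f : N ⊗[ℂ] U →ₗ[ℂ] W,
      (∀ (a : A) (n : N) (u : U), f (((op a) • n) ⊗ₜ[ℂ] u) = f (n ⊗ₜ[ℂ] (a • u))) →
      (∀ (a : A) (n : N) (u : U), f ((a • n) ⊗ₜ[ℂ] u) = a • f (n ⊗ₜ[ℂ] u)) →
      f (y ⊗ₜ[ℂ] v) = -f (x ⊗ₜ[ℂ] v)) ∧
    (∀ f g : N ⊗[ℂ] U →ₗ[ℂ] W,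
      (∀ (a : A) (n : N) (u : U), f (((op a) • n) ⊗ₜ[ℂ] u) = f (n ⊗ₜ[ℂ] (a • u))) →
      (∀ (a : A) (n : N) (u : U), f ((a • n) ⊗ₜ[ℂ] u) = a • f (n ⊗ₜ[ℂ] u)) →
      (∀ (a : A) (n : N) (u : U), g (((op a) • n) ⊗ₜ[ℂ] u) = g (n ⊗ₜ[ℂ] (a • u))) →
      (∀ (a : A) (n : N) (u : U), g ((a • n) ⊗ₜ[ℂ] u) = a • g (n ⊗ₜ[ℂ] u)) →
      ∃ c d : ℂ, ¬(c = 0 ∧ d = 0) ∧ ∀ z : N ⊗[ℂ] U, c • f z = d • g z) := by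
  have hEU := smul_eq_smul_of_forall_eq_smul hv hEv
  have hEW := smul_eq_smul_of_forall_eq_smul hw hEw
  have hyx {f : N ⊗[ℂ] U →ₗ[ℂ] W} (hf : f ∈ balancedHoms A) : f (y ⊗ₜ v) = -f (x ⊗ₜ v) := by
    rw [balancedHoms.apply_tmul_eq_sub_smul hf hEW hEv hx]
    norm_num
  refine ⟨fun f hbal hlin => ?_, fun f hbal hlin => hyx ⟨hbal, hlin⟩,
    fun f g hf hf' hg hg' => ?_⟩
  · have hf : f ∈ balancedHoms A := ⟨hbal, hlin⟩
    have hU {p q : N} (hpq : E • p - op E • p = q) : f (q ⊗ₜ v) = 0 := by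
      rw [balancedHoms.apply_tmul_eq_sub_smul hf hEU hEv hpq, sub_self, zero_smul]
    exact balancedHoms.eq_zero_of_apply_tmul_eq_zero hf hspan hv (hU hy) (hU hx)
  · have hW : ∀ f ∈ (balancedHoms A : Submodule ℂ (N ⊗[ℂ] U →ₗ[ℂ] W)), f (x ⊗ₜ v) = 0 → f = 0 :=
      fun f hf hfx =>
        balancedHoms.eq_zero_of_apply_tmul_eq_zero hf hspan hv hfx (by rw [hyx hf, hfx, neg_zero])
    obtain ⟨c, d, hcd, h⟩ := exists_smul_eq_smul_of_eq_zero_of_map_eq_zero (balancedHoms A)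
      (LinearMap.applyₗ (x ⊗ₜ v)) hW hw ⟨hf, hf'⟩ ⟨hg, hg'⟩
    exact ⟨c, d, hcd, LinearMap.congr_fun h⟩

/-- Abstract form of the fusion-rule computation for the rank-one lattice VOA:
`A` is an associative unital `ℂ`-algebra (`A_θ(V_L)`), `N` is an `A`-bimodule
(`A_θ(V_{L+α/2})`) spanned as a bimodule by `x = [e^{α/2}]` and `y = [e^{−α/2}]`
with `E·x − x·E = y` and `E·y − y·E = x`;  `U = ℂv` and `W = ℂw` are one-dimensional
left `A`-modules with `E·v = ½v` and `E·w = −½w`.  Then every `A`-module homomorphism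
(encoded as an `A`-balanced, `A`-linear map out of `N ⊗_ℂ U`) `N ⊗_A U → U` vanishes,
every such map `N ⊗_A U → W` satisfies `f(y⊗v) = −f(x⊗v)`, and the space of such maps
`N ⊗_A U → W` is at most one-dimensional. -/
theorem lattice_fusion_homs (A : Type*) [Ring A] [Algebra ℂ A]
    (N : Type*) [AddCommGroup N] [Module ℂ N] [Module A N] [Module Aᵐᵒᵖ N]
    [IsScalarTower ℂ A N] [IsScalarTower ℂ Aᵐᵒᵖ N] [SMulCommClass A Aᵐᵒᵖ N]
    (U W : Type*) [AddCommGroup U] [Module ℂ U] [Module A U] [IsScalarTower ℂ A U]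
    [AddCommGroup W] [Module ℂ W] [Module A W] [IsScalarTower ℂ A W]
    (E : A) (x y : N)
    (hspan : Submodule.span ℂ
        {n : N | ∃ a b : A, n = a • ((op b) • x) ∨ n = a • ((op b) • y)} = ⊤)
    (hx : E • x - (op E) • x = y) (hy : E • y - (op E) • y = x)
    (v : U) (hv : ∀ u : U, ∃ c : ℂ, u = c • v) (hEv : E • v = (2⁻¹ : ℂ) • v)
    (w : W) (hw : ∀ u : W, ∃ c : ℂ, u = c • w) (hEw : E • w = (-2⁻¹ : ℂ) • w) :
    (∀ f : N ⊗[ℂ] U →ₗ[ℂ] U,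
      (∀ (a : A) (n : N) (u : U), f (((op a) • n) ⊗ₜ[ℂ] u) = f (n ⊗ₜ[ℂ] (a • u))) →
      (∀ (a : A) (n : N) (u : U), f ((a • n) ⊗ₜ[ℂ] u) = a • f (n ⊗ₜ[ℂ] u)) →
      f = 0) ∧
    (∀ f : N ⊗[ℂ] U →ₗ[ℂ] W,
      (∀ (a : A) (n : N) (u : U), f (((op a) • n) ⊗ₜ[ℂ] u) = f (n ⊗ₜ[ℂ] (a • u))) →
      (∀ (a : A) (n : N) (u : U), f ((a • n) ⊗ₜ[ℂ] u) = a • f (n ⊗ₜ[ℂ] u)) →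
      f (y ⊗ₜ[ℂ] v) = -f (x ⊗ₜ[ℂ] v)) ∧
    (∀ f g : N ⊗[ℂ] U →ₗ[ℂ] W,
      (∀ (a : A) (n : N) (u : U), f (((op a) • n) ⊗ₜ[ℂ] u) = f (n ⊗ₜ[ℂ] (a • u))) →
      (∀ (a : A) (n : N) (u : U), f ((a • n) ⊗ₜ[ℂ] u) = a • f (n ⊗ₜ[ℂ] u)) →
      (∀ (a : A) (n : N) (u : U), g (((op a) • n) ⊗ₜ[ℂ] u) = g (n ⊗ₜ[ℂ] (a • u))) →
      (∀ (a : A) (n : N) (u : U), g ((a • n) ⊗ₜ[ℂ] u) = a • g (n ⊗ₜ[ℂ] u)) →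
      ∃ c d : ℂ, ¬(c = 0 ∧ d = 0) ∧ ∀ z : N ⊗[ℂ] U, c • f z = d • g z) :=
  lattice_fusion_homs_general A N U W E x y hspan hx hy v hv hEv w hw hEw
end
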